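/- (Termination correctness of confidence-interval elimination) Let θ_1,…,θ_K be reals and OPT the set of indices of the m largest values (assume θ_m > θ_{m+1}). Suppose H is a set of m indices and for every i ∈ H we have a lower bound L_i ≤ θ̂_i and for every j ∉ H an upper bound U_j ≥ θ̂_j such that θ_i ∈ [L_i, θ̂_i + (θ̂_i − L_i)] for i ∈ H and θ_j ∈ [θ̂_j − (U_j − θ̂_j), U_j] for j ∉ H. If min_{i∈H} L_i ≥ max_{j∉H} U_j, then H = OPT. -/
import Mathlib


/-- Termination correctness of confidence-interval elimination: if values are sorted with
`θ m > θ (m+1)`, the candidate set `H` of size `m` has lower confidence bounds, the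
complement has upper confidence bounds, all true values lie in their confidence
intervals, and every lower bound of `H` is at least every upper bound of the complement,
then `H` is exactly the set of the top `m` indices. -/
theorem stmt12 (θ θhat L U : ℕ → ℝ) (K m : ℕ) (hm : m < K)
    (hsort : ∀ i j, 1 ≤ i → i ≤ j → j ≤ K → θ j ≤ θ i)
    (hgap : θ (m + 1) < θ m)
    (H : Finset ℕ) (hHsub : H ⊆ Finset.Icc 1 K) (hHcard : H.card = m)
    (hLB : ∀ i ∈ H, L i ≤ θhat i ∧ L i ≤ θ i ∧ θ i ≤ θhat i + (θhat i - L i))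
    (hUB : ∀ j ∈ Finset.Icc 1 K, j ∉ H →
      θhat j ≤ U j ∧ θhat j - (U j - θhat j) ≤ θ j ∧ θ j ≤ U j)
    (hstop : ∀ i ∈ H, ∀ j ∈ Finset.Icc 1 K, j ∉ H → U j ≤ L i) :
    H = Finset.Icc 1 m := by
  by_contra hne
  -- there is an element of H outside Icc 1 m
  have hcard' : (Finset.Icc 1 m).card = m := by simp
  have hnotsub : ¬ H ⊆ Finset.Icc 1 m := by
    intro hsub
    exact hne (Finset.eq_of_subset_of_card_le hsub (by rw [hHcard, hcard']))
  obtain ⟨a, haH, haI⟩ := Finset.not_subset.mp hnotsub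
  have hnotsub2 : ¬ Finset.Icc 1 m ⊆ H := by
    intro hsub
    exact hne (Finset.eq_of_subset_of_card_le hsub (by rw [hHcard, hcard'])).symm
  obtain ⟨b, hbI, hbH⟩ := Finset.not_subset.mp hnotsub2
  have haK := Finset.mem_Icc.mp (hHsub haH)
  have hbm := Finset.mem_Icc.mp hbI
  have hbK : b ∈ Finset.Icc 1 K := Finset.mem_Icc.mpr ⟨hbm.1, hbm.2.trans hm.le⟩
  -- a ≥ m + 1
  have ha1 : m + 1 ≤ a := by
    rcases Nat.lt_or_ge a (m + 1) with h | h
    · exact absurd (Finset.mem_Icc.mpr ⟨haK.1, Nat.lt_succ_iff.mp h⟩) haI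
    · exact h
  have h1 : θ b ≤ U b := (hUB b hbK hbH).2.2
  have h2 : U b ≤ L a := hstop a haH b hbK hbH
  have h3 : L a ≤ θ a := (hLB a haH).2.1
  have h4 : θ a ≤ θ (m + 1) := hsort (m + 1) a (Nat.succ_le_succ (Nat.zero_le m)) ha1 haK.2
  have h5 : θ m ≤ θ b := hsort b m hbm.1 hbm.2 hm.le
  linarith
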